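/- Let (Ω, 𝒜, ℙ) be a probability space, m ≥ 1, Y = (Y_1,…,Y_m) an m-tuple of stochastic processes, and ρ a map assigning to each stopped tuple (Y_1^{t_1},…,Y_m^{t_m}) a real random variable. Let Π = (π^n)_{n∈ℕ} be an increasing sequence of unbounded partitions of [0,∞) with mesh tending to 0, and suppose the ISU decomposition D = (D_1,…,D_m) of t ↦ ρ(Y^t) with respect to Π exists, i.e. for each i and t the SU components D^n_i(t) with respect to π^n converge in probability to D_i(t). Fix i and 0 ≤ a < b, and suppose every path of Y_i is constant on the interval (a,b]. Then for all a < s ≤ t ≤ b, almost surely D_i(t) = D_i(s); i.e. the ISU decomposition is normalized. -/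

import Mathlib

/-!
Once the mesh of the partition is smaller than `s' - a`, the SU decompositions at `s'` and at
`t'` agree term by term: an interval `[s_l, s_{l+1}]` either ends before `s'`, where stopping at
`s'` or at `t'` makes no difference, or starts after `a`, where `v^{l,i}` and `w^{l,i}` only
differ in the stopping time of `Y_i` inside `(a, b]`, on which `Y_i` does not move, so the term
vanishes for both times. The two sequences of SU decompositions are thus eventually equal, and
limits in measure are unique almost everywhere.
-/

open Filter Topology Set MeasureTheory

/-- The sequentially-updated time vector `v^{l,i}(t)`. -/
def suV {m : ℕ} (s : ℕ → ℝ) (l : ℕ) (i : Fin m) (t : ℝ) : Fin m → ℝ :=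
  fun j => if j ≤ i then min (s (l + 1)) t else min (s l) t

/-- The time vector `w^{l,i}(t)`: as `v^{l,i}(t)` but with `i`-th coordinate `s_l ∧ t`. -/
def suW {m : ℕ} (s : ℕ → ℝ) (l : ℕ) (i : Fin m) (t : ℝ) : Fin m → ℝ :=
  fun j => if j < i then min (s (l + 1)) t else min (s l) t

/-- The componentwise stopped tuple of processes `Y^{(t_1,…,t_m)}`. -/
noncomputable def stopProc {Ω : Type*} {m : ℕ} {E : Fin m → Type*}
    (Y : (i : Fin m) → Ω → ℝ → E i) (tv : Fin m → ℝ) :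
    (i : Fin m) → Ω → ℝ → E i :=
  fun i ω u => if u ≤ tv i then Y i ω u else Y i ω (tv i)

section SUDecomposition

variable {Ω : Type*} {m : ℕ} {E : Fin m → Type*}

theorem suV_eq_update_suW (s : ℕ → ℝ) (l : ℕ) (i : Fin m) (t : ℝ) :
    suV s l i t = Function.update (suW s l i t) i (min (s (l + 1)) t) := by
  funext j
  rcases eq_or_ne j i with rfl | hj
  · simp [suV]
  · simp only [suV, suW, Function.update_of_ne hj, hj.le_iff_lt]

theorem suV_of_le {s : ℕ → ℝ} {l : ℕ} (hs : s l ≤ s (l + 1)) (i : Fin m) {t : ℝ}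
    (ht : s (l + 1) ≤ t) : suV s l i t = fun j => if j ≤ i then s (l + 1) else s l := by
  unfold suV
  rw [min_eq_left ht, min_eq_left (hs.trans ht)]

theorem suW_of_le {s : ℕ → ℝ} {l : ℕ} (hs : s l ≤ s (l + 1)) (i : Fin m) {t : ℝ}
    (ht : s (l + 1) ≤ t) : suW s l i t = fun j => if j < i then s (l + 1) else s l := by
  unfold suW
  rw [min_eq_left ht, min_eq_left (hs.trans ht)]

theorem stopProc_update_eq_of_const {Y : (i : Fin m) → Ω → ℝ → E i} {tv : Fin m → ℝ}
    {i : Fin m} {u : ℝ} (hu : tv i ≤ u)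
    (hY : ∀ ω, ∀ r ∈ Icc (tv i) u, Y i ω r = Y i ω (tv i)) :
    stopProc Y (Function.update tv i u) = stopProc Y tv := by
  funext j ω r
  rcases eq_or_ne j i with rfl | hj
  · simp only [stopProc, Function.update_self]
    by_cases hr : r ≤ tv j
    · simp [hr, hr.trans hu]
    by_cases hru : r ≤ u
    · simp [hr, hru, hY ω r ⟨(not_le.1 hr).le, hru⟩]
    · simp [hr, hru, hY ω u ⟨hu, le_rfl⟩]
  · simp only [stopProc, Function.update_of_ne hj]

theorem stopProc_suV_eq_suW_of_const {Y : (i : Fin m) → Ω → ℝ → E i} {i : Fin m}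
    {a b : ℝ}
    (hY : ∀ ω, ∀ u ∈ Ioc a b, ∀ v ∈ Ioc a b, Y i ω u = Y i ω v)
    {s : ℕ → ℝ} {l : ℕ} (hs : s l ≤ s (l + 1)) (hal : a < s l) {t : ℝ} (hat : a < t)
    (htb : t ≤ b) : stopProc Y (suV s l i t) = stopProc Y (suW s l i t) := by
  have hlow : min (s l) t ∈ Ioc a b := ⟨lt_min hal hat, (min_le_right _ _).trans htb⟩
  rw [suV_eq_update_suW]
  refine stopProc_update_eq_of_const (by simpa [suW] using min_le_min_right t hs) ?_
  intro ω r ⟨hlr, hru⟩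
  simp only [suW, lt_irrefl, if_false] at hlr ⊢
  exact hY ω r ⟨hlow.1.trans_le hlr, hru.trans ((min_le_right _ _).trans htb)⟩ _ hlow

/-- The `i`-th component of the SU decomposition of `t ↦ ρ(Y^t)` along the partition `s`. -/
noncomputable def suDecomp (ρ : ((i : Fin m) → Ω → ℝ → E i) → Ω → ℝ)
    (Y : (i : Fin m) → Ω → ℝ → E i) (s : ℕ → ℝ) (i : Fin m) (t : ℝ) : Ω → ℝ :=
  fun ω => ∑ᶠ l : ℕ, (ρ (stopProc Y (suV s l i t)) ω - ρ (stopProc Y (suW s l i t)) ω)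

theorem suDecomp_eq_of_mesh_lt (ρ : ((i : Fin m) → Ω → ℝ → E i) → Ω → ℝ)
    {Y : (i : Fin m) → Ω → ℝ → E i} {i : Fin m} {a b : ℝ}
    (hY : ∀ ω, ∀ u ∈ Ioc a b, ∀ v ∈ Ioc a b, Y i ω u = Y i ω v)
    {s : ℕ → ℝ} (hs : Monotone s) {s' t' : ℝ} (hmesh : ∀ k, s (k + 1) - s k < s' - a)
    (has' : a < s') (hst : s' ≤ t') (htb : t' ≤ b) :
    suDecomp ρ Y s i t' = suDecomp ρ Y s i s' := by
  funext ω
  refine finsum_congr fun l => ?_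
  have hsl : s l ≤ s (l + 1) := hs l.le_succ
  by_cases hl : s (l + 1) ≤ s'
  · rw [suV_of_le hsl i hl, suV_of_le hsl i (hl.trans hst), suW_of_le hsl i hl,
      suW_of_le hsl i (hl.trans hst)]
  · have hal : a < s l := by linarith [hmesh l, not_le.1 hl]
    rw [stopProc_suV_eq_suW_of_const hY hsl hal (has'.trans_le hst) htb,
      stopProc_suV_eq_suW_of_const hY hsl hal has' (hst.trans htb), sub_self, sub_self]

end SUDecomposition

theorem isu_decomposition_normalized_general
    {Ω : Type*} [MeasurableSpace Ω] (μ : Measure Ω)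
    {m : ℕ} {E : Fin m → Type*}
    (Y : (i : Fin m) → Ω → ℝ → E i)
    (ρ : ((i : Fin m) → Ω → ℝ → E i) → Ω → ℝ)
    (s : ℕ → ℕ → ℝ)
    (hsmono : ∀ n, StrictMono (s n))
    (hmesh : ∀ ε > (0 : ℝ), ∃ N, ∀ n ≥ N, ∀ k, s n (k + 1) - s n k < ε)
    (D : Fin m → ℝ → Ω → ℝ)
    (hD : ∀ (i : Fin m) (t : ℝ), 0 ≤ t →
      TendstoInMeasure μ
        (fun n ω => ∑ᶠ l : ℕ,
          (ρ (stopProc Y (suV (s n) l i t)) ω - ρ (stopProc Y (suW (s n) l i t)) ω))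
        atTop (D i t))
    (i : Fin m) (a b : ℝ) (ha : 0 ≤ a)
    (hconst : ∀ ω, ∀ u ∈ Ioc a b, ∀ v ∈ Ioc a b, Y i ω u = Y i ω v) :
    ∀ s' t', a < s' → s' ≤ t' → t' ≤ b →
      ∀ᵐ ω ∂μ, D i t' ω = D i s' ω := by
  intro s' t' has' hst htb
  have hs' : 0 ≤ s' := ha.trans has'.le
  obtain ⟨N, hN⟩ := hmesh (s' - a) (sub_pos.2 has')
  have hsu : ∀ᶠ n in atTop, suDecomp ρ Y (s n) i s' = suDecomp ρ Y (s n) i t' :=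
    eventually_atTop.2 ⟨N, fun n hn =>
      (suDecomp_eq_of_mesh_lt ρ hconst (hsmono n).monotone (hN n hn) has' hst htb).symm⟩
  have ht'_to_Ds' : TendstoInMeasure μ (fun n => suDecomp ρ Y (s n) i t') atTop (D i s') :=
    (hD i s' hs').congr' (hsu.mono fun _ h => h ▸ EventuallyEq.rfl) EventuallyEq.rfl
  exact tendstoInMeasure_ae_unique (hD i t' (hs'.trans hst)) ht'_to_Ds'

/-- normalization of the ISU decomposition, Proposition 4.2. If every
path of `Y i` is constant on `(a,b]` and the ISU decomposition exists (as limit in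
probability of SU decompositions along an increasing sequence of unbounded partitions with
vanishing mesh), then for all `a < s ≤ t ≤ b`, almost surely `D_i(t) = D_i(s)`. -/
theorem isu_decomposition_normalized
    {Ω : Type*} [MeasurableSpace Ω] (μ : Measure Ω) [IsProbabilityMeasure μ]
    {m : ℕ} (hm : 1 ≤ m) {E : Fin m → Type*} (hE : ∀ i, Nonempty (E i))
    (Y : (i : Fin m) → Ω → ℝ → E i)
    (ρ : ((i : Fin m) → Ω → ℝ → E i) → Ω → ℝ)
    (s : ℕ → ℕ → ℝ)
    (hs0 : ∀ n, s n 0 = 0) (hsmono : ∀ n, StrictMono (s n))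
    (hsunbdd : ∀ n, Tendsto (s n) atTop atTop)
    (hincr : ∀ n, Set.range (s n) ⊆ Set.range (s (n + 1)))
    (hmesh : ∀ ε > (0 : ℝ), ∃ N, ∀ n ≥ N, ∀ k, s n (k + 1) - s n k < ε)
    (D : Fin m → ℝ → Ω → ℝ)
    (hD : ∀ (i : Fin m) (t : ℝ), 0 ≤ t →
      TendstoInMeasure μ
        (fun n ω => ∑ᶠ l : ℕ,
          (ρ (stopProc Y (suV (s n) l i t)) ω - ρ (stopProc Y (suW (s n) l i t)) ω))
        atTop (D i t))
    (i : Fin m) (a b : ℝ) (ha : 0 ≤ a) (hab : a < b)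
    (hconst : ∀ ω, ∀ u ∈ Ioc a b, ∀ v ∈ Ioc a b, Y i ω u = Y i ω v) :
    ∀ s' t', a < s' → s' ≤ t' → t' ≤ b →
      ∀ᵐ ω ∂μ, D i t' ω = D i s' ω :=
  isu_decomposition_normalized_general μ Y ρ s hsmono hmesh D hD i a b ha hconst
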